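/- With the trajectory and greedy setup, suppose each action a_t lies in the box [-1,1]^m and maximizes Q_t over [-1,1]^m, and suppose the value-gradients G_t := ∇Ṽ(x_t) satisfy G_F = 0 and the costate recursion G_t = ∇_x r(x_t, a_t) + γ (D_x f(x_t, a_t))ᵀ G_{t+1} for 0 ≤ t < F. Then the trajectory is locally extremal: viewing the total reward R as a differentiable function of the action tuple (a₀,…,a_{F−1}) with x₀ fixed, for every t and every coordinate i: if a_t^i ∈ (-1,1) and ∂Q_t/∂a^i(a_t) = 0 then ∂R/∂(a_t^i) = 0; if a_t^i = 1 then ∂R/∂(a_t^i) ≥ 0, with strict inequality when ∂Q_t/∂a^i(a_t) ≠ 0; and if a_t^i = -1 then ∂R/∂(a_t^i) ≤ 0, with strict inequality when ∂Q_t/∂a^i(a_t) ≠ 0. -/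

import Mathlib

open Matrix

/-- Gradient of a scalar function, as a vector of partial derivatives. -/
noncomputable def grad {k : ℕ} (g : (Fin k → ℝ) → ℝ) (x : Fin k → ℝ) : Fin k → ℝ :=
  fun i => fderiv ℝ g x (Pi.single i 1)

/-- Gradient of `r` in the state variable. -/
noncomputable def gradX {n m : ℕ} (r : (Fin n → ℝ) × (Fin m → ℝ) → ℝ)
    (x : Fin n → ℝ) (a : Fin m → ℝ) : Fin n → ℝ :=
  fun i => fderiv ℝ (fun y => r (y, a)) x (Pi.single i 1)

/-- Jacobian of `f` in the state variable (rows indexed by output components). -/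
noncomputable def jacX {n m : ℕ} (f : (Fin n → ℝ) × (Fin m → ℝ) → Fin n → ℝ)
    (x : Fin n → ℝ) (a : Fin m → ℝ) : Matrix (Fin n) (Fin n) ℝ :=
  Matrix.of fun j i => fderiv ℝ (fun y => f (y, a) j) x (Pi.single i 1)

/-- Extend a finite action tuple to all of `ℕ` (by `0` beyond `F`). -/
noncomputable def pad {F m : ℕ} (as : Fin F → Fin m → ℝ) : ℕ → Fin m → ℝ :=
  fun t => if h : t < F then as ⟨t, h⟩ else 0

/-- The trajectory generated from `x₀` by the actions `as`. -/
def traj {n m : ℕ} (f : (Fin n → ℝ) × (Fin m → ℝ) → Fin n → ℝ)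
    (x₀ : Fin n → ℝ) (as : ℕ → Fin m → ℝ) : ℕ → Fin n → ℝ
  | 0 => x₀
  | t + 1 => f (traj f x₀ as t, as t)

/-- The total (discounted) reward, as a function of the whole action tuple. -/
noncomputable def Rtot {n m : ℕ} (F : ℕ) (γ : ℝ)
    (f : (Fin n → ℝ) × (Fin m → ℝ) → Fin n → ℝ)
    (r : (Fin n → ℝ) × (Fin m → ℝ) → ℝ)
    (x₀ : Fin n → ℝ) (as : Fin F → Fin m → ℝ) : ℝ :=
  ∑ t ∈ Finset.range F, γ ^ t * r (traj f x₀ (pad as) t, pad as t)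

/-!
Perturbing the actions by `e` perturbs the states by `δ` with `δ₀ = 0` and
`δ_{s+1} = D_x f δ_s + D_a f e_s`. Pairing `δ` with the costates `G`, which obey the adjoint
recursion `G_s = ∇ₓ r + γ (D_x f)ᵀ G_{s+1}` with `G_F = 0`, makes every state contribution to
`DR(a) e` telescope away, and what is left is `∑ γ^s (∇ₐ r + γ (D_a f)ᵀ G_{s+1}) · e_s`. As
`G_{s+1} = ∇Ṽ(x_{s+1})`, the summand is `γ^s DQ_s(a_s) e_s`; so `∂R/∂a_t^i = γ^t ∂Q_t/∂a^i`,
and the sign conditions are first-order optimality of the greedy action `a_t` on the box.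
-/

open Finset

lemma fderiv_prodMk_left_apply {E F G : Type*} [NormedAddCommGroup E] [NormedSpace ℝ E]
    [NormedAddCommGroup F] [NormedSpace ℝ F] [NormedAddCommGroup G] [NormedSpace ℝ G]
    {φ : E × F → G} {x : E} {b : F} (hφ : DifferentiableAt ℝ φ (x, b)) (u : E) :
    fderiv ℝ (fun y => φ (y, b)) x u = fderiv ℝ φ (x, b) (u, 0) := by
  rw [fderiv_fun_comp x hφ (hasFDerivAt_prodMk_left x b).differentiableAt,
    (hasFDerivAt_prodMk_left x b).fderiv]
  rfl

lemma map_single_eq_smul {R M L ι : Type*} [Semiring R] [AddCommMonoid M] [Module R M]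
    [FunLike L (ι → R) M] [LinearMapClass L R (ι → R) M] [DecidableEq ι] (φ : L) (i : ι) (c : R) :
    φ (Pi.single i c) = c • φ (Pi.single i 1) := by
  rw [← map_smul, ← Pi.single_smul', smul_eq_mul, mul_one]

lemma grad_dotProduct {k : ℕ} (g : (Fin k → ℝ) → ℝ) (x u : Fin k → ℝ) :
    grad g x ⬝ᵥ u = fderiv ℝ g x u := by
  conv_rhs => rw [← univ_sum_single u, map_sum]
  refine sum_congr rfl fun i _ => ?_
  rw [map_single_eq_smul, smul_eq_mul, mul_comm]
  rfl

lemma gradX_dotProduct {n m : ℕ} {r : (Fin n → ℝ) × (Fin m → ℝ) → ℝ} {x : Fin n → ℝ}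
    {b : Fin m → ℝ} (hr : DifferentiableAt ℝ r (x, b)) (u : Fin n → ℝ) :
    gradX r x b ⬝ᵥ u = fderiv ℝ r (x, b) (u, 0) :=
  (grad_dotProduct _ x u).trans (fderiv_prodMk_left_apply hr u)

lemma jacX_mulVec {n m : ℕ} {f : (Fin n → ℝ) × (Fin m → ℝ) → Fin n → ℝ} {x : Fin n → ℝ}
    {b : Fin m → ℝ} (hf : DifferentiableAt ℝ f (x, b)) (u : Fin n → ℝ) :
    jacX f x b *ᵥ u = fderiv ℝ f (x, b) (u, 0) := by
  have hfx : DifferentiableAt ℝ (fun y => f (y, b)) x :=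
    hf.comp x (hasFDerivAt_prodMk_left x b).differentiableAt
  have hjac : jacX f x b = LinearMap.toMatrix' (fderiv ℝ (fun y => f (y, b)) x).toLinearMap := by
    ext j i
    simp [jacX, LinearMap.toMatrix'_apply, fderiv_apply hfx]
  rw [hjac, LinearMap.toMatrix'_mulVec, ← fderiv_prodMk_left_apply hf]
  rfl

lemma sum_discounted_dotProduct_eq_of_costate {R ι : Type*} [CommRing R] [Fintype ι] (γ : R)
    (N : ℕ) (G g δ c : ℕ → ι → R) (A : ℕ → Matrix ι ι R)
    (hG : ∀ s < N, G s = g s + γ • (A s)ᵀ *ᵥ G (s + 1)) (hGN : G N = 0)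
    (hδ : ∀ s < N, δ (s + 1) = A s *ᵥ δ s + c s) :
    ∑ s ∈ range N, γ ^ s * (g s ⬝ᵥ δ s) =
      G 0 ⬝ᵥ δ 0 + ∑ s ∈ range N, γ ^ (s + 1) * (G (s + 1) ⬝ᵥ c s) := by
  have hstep : ∀ s ∈ range N,
      γ ^ s * (g s ⬝ᵥ δ s) - γ ^ (s + 1) * (G (s + 1) ⬝ᵥ c s) =
        γ ^ s * (G s ⬝ᵥ δ s) - γ ^ (s + 1) * (G (s + 1) ⬝ᵥ δ (s + 1)) := by
    intro s hs
    rw [hG s (mem_range.1 hs), hδ s (mem_range.1 hs), add_dotProduct, smul_dotProduct,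
      mulVec_transpose, dotProduct_add, ← dotProduct_mulVec, smul_eq_mul]
    ring
  have htele := sum_range_sub' (fun s => γ ^ s * (G s ⬝ᵥ δ s)) N
  rw [hGN, zero_dotProduct, mul_zero, sub_zero, pow_zero, one_mul, ← sum_congr rfl hstep,
    sum_sub_distrib] at htele
  rw [← htele, sub_add_cancel]

lemma IsMaxOn.fderiv_apply_nonpos_of_add_mem {E : Type*} [NormedAddCommGroup E]
    [NormedSpace ℝ E] {g : E → ℝ} {s : Set E} {b y : E} (hmax : IsMaxOn g s b)
    (hg : DifferentiableAt ℝ g b) (hs : Convex ℝ s) (hb : b ∈ s) (hby : b + y ∈ s) :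
    fderiv ℝ g b y ≤ 0 :=
  hmax.localize.hasFDerivWithinAt_nonpos hg.hasFDerivAt.hasFDerivWithinAt
    (mem_posTangentConeAt_of_segment_subset (hs.segment_subset hb hby))

section PiIcc

variable {ι : Type*} [DecidableEq ι] {l u : ι → ℝ} {g : (ι → ℝ) → ℝ} {b : ι → ℝ}

lemma add_single_mem_univ_pi_Icc (hb : b ∈ Set.univ.pi fun j => Set.Icc (l j) (u j)) (i : ι) {c : ℝ}
    (hc : b i + c ∈ Set.Icc (l i) (u i)) :
    b + Pi.single i c ∈ Set.univ.pi fun j => Set.Icc (l j) (u j) := by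
  refine Set.mem_univ_pi.2 fun j => ?_
  rcases eq_or_ne j i with rfl | hj
  · simpa using hc
  · simpa [hj] using Set.mem_univ_pi.1 hb j

lemma IsMaxOn.fderiv_apply_single_nonneg [Fintype ι]
    (hmax : IsMaxOn g (Set.univ.pi fun j => Set.Icc (l j) (u j)) b) (hg : DifferentiableAt ℝ g b)
    (hb : b ∈ Set.univ.pi fun j => Set.Icc (l j) (u j)) {i : ι} (hi : l i < b i) :
    0 ≤ fderiv ℝ g b (Pi.single i 1) := by
  have hbi := Set.mem_univ_pi.1 hb i
  have hdown := hmax.fderiv_apply_nonpos_of_add_mem hg (convex_pi fun j _ => convex_Icc _ _) hb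
    (add_single_mem_univ_pi_Icc hb i (c := l i - b i) (by simpa using hbi.1.trans hbi.2))
  rw [map_single_eq_smul, smul_eq_mul] at hdown
  exact nonneg_of_mul_nonpos_right hdown (by linarith)

lemma IsMaxOn.fderiv_apply_single_nonpos [Fintype ι]
    (hmax : IsMaxOn g (Set.univ.pi fun j => Set.Icc (l j) (u j)) b) (hg : DifferentiableAt ℝ g b)
    (hb : b ∈ Set.univ.pi fun j => Set.Icc (l j) (u j)) {i : ι} (hi : b i < u i) :
    fderiv ℝ g b (Pi.single i 1) ≤ 0 := by
  have hbi := Set.mem_univ_pi.1 hb i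
  have hup := hmax.fderiv_apply_nonpos_of_add_mem hg (convex_pi fun j _ => convex_Icc _ _) hb
    (add_single_mem_univ_pi_Icc hb i (c := u i - b i) (by simpa using hbi.1.trans hbi.2))
  rw [map_single_eq_smul, smul_eq_mul] at hup
  exact nonpos_of_mul_nonpos_right hup (by linarith)

end PiIcc

section Trajectory

variable {n m F : ℕ} {f : (Fin n → ℝ) × (Fin m → ℝ) → Fin n → ℝ} {x₀ : Fin n → ℝ}

noncomputable def padCLM (F m s : ℕ) : (Fin F → Fin m → ℝ) →L[ℝ] Fin m → ℝ :=
  if h : s < F then ContinuousLinearMap.proj (⟨s, h⟩ : Fin F) else 0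

lemma padCLM_apply (s : ℕ) (as : Fin F → Fin m → ℝ) : padCLM F m s as = pad as s := by
  unfold padCLM pad
  split_ifs <;> rfl

lemma hasFDerivAt_pad (s : ℕ) (a : Fin F → Fin m → ℝ) :
    HasFDerivAt (fun as : Fin F → Fin m → ℝ => pad as s) (padCLM F m s) a := by
  rw [show (fun as => pad as s) = ⇑(padCLM F m s) from funext fun as => (padCLM_apply s as).symm]
  exact (padCLM F m s).hasFDerivAt

lemma pad_coe (as : Fin F → Fin m → ℝ) (t : Fin F) : pad as t = as t := by
  simp [pad]

lemma pad_single (t : Fin F) (v : Fin m → ℝ) (s : ℕ) :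
    pad (Pi.single t v) s = if s = t then v else 0 := by
  unfold pad
  split_ifs with hsF hst hst
  · subst hst; simp
  · rw [Pi.single_eq_of_ne (fun h => hst (congrArg Fin.val h))]
  · exact absurd (hst ▸ t.isLt) hsF
  · rfl

lemma sum_range_pad_single {M : Type*} [AddCommMonoid M] (φ : ℕ → (Fin m → ℝ) → M)
    (hφ : ∀ s, φ s 0 = 0) (t : Fin F) (v : Fin m → ℝ) :
    ∑ s ∈ range F, φ s (pad (Pi.single t v) s) = φ t v := by
  rw [sum_eq_single (t : ℕ) (fun s _ hst => by rw [pad_single, if_neg hst, hφ])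
    (fun ht => absurd (mem_range.2 t.isLt) ht), pad_single, if_pos rfl]

lemma differentiable_traj_pad (hf : Differentiable ℝ f) (s : ℕ) :
    Differentiable ℝ fun as : Fin F → Fin m → ℝ => traj f x₀ (pad as) s := by
  induction s with
  | zero => exact differentiable_const x₀
  | succ s ih => exact hf.comp (ih.prodMk fun a => (hasFDerivAt_pad s a).differentiableAt)

lemma hasFDerivAt_traj_pad_prodMk (hf : Differentiable ℝ f) (s : ℕ) (a : Fin F → Fin m → ℝ) :
    HasFDerivAt (fun as => (traj f x₀ (pad as) s, pad as s))
      ((fderiv ℝ (fun as => traj f x₀ (pad as) s) a).prod (padCLM F m s)) a :=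
  (differentiable_traj_pad hf s a).hasFDerivAt.prodMk (hasFDerivAt_pad s a)

lemma fderiv_traj_pad_succ_apply (hf : Differentiable ℝ f) (s : ℕ) (a e : Fin F → Fin m → ℝ) :
    fderiv ℝ (fun as => traj f x₀ (pad as) (s + 1)) a e =
      fderiv ℝ f (traj f x₀ (pad a) s, pad a s)
        (fderiv ℝ (fun as => traj f x₀ (pad as) s) a e, pad e s) := by
  have hcomp : HasFDerivAt (fun as => traj f x₀ (pad as) (s + 1)) _ a :=
    (hf _).hasFDerivAt.comp a (hasFDerivAt_traj_pad_prodMk hf s a)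
  simp [hcomp.fderiv, padCLM_apply]

variable {r : (Fin n → ℝ) × (Fin m → ℝ) → ℝ} {γ : ℝ}

lemma hasFDerivAt_Rtot (hf : Differentiable ℝ f) (hr : Differentiable ℝ r)
    (a : Fin F → Fin m → ℝ) :
    HasFDerivAt (Rtot F γ f r x₀) (∑ s ∈ range F, γ ^ s •
      (fderiv ℝ r (traj f x₀ (pad a) s, pad a s)).comp
        ((fderiv ℝ (fun as => traj f x₀ (pad as) s) a).prod (padCLM F m s))) a :=
  HasFDerivAt.fun_sum fun s _ =>
    ((hr _).hasFDerivAt.comp a (hasFDerivAt_traj_pad_prodMk hf s a)).const_mul (γ ^ s)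

lemma fderiv_Rtot_apply (hf : Differentiable ℝ f) (hr : Differentiable ℝ r)
    (a e : Fin F → Fin m → ℝ) :
    fderiv ℝ (Rtot F γ f r x₀) a e = ∑ s ∈ range F, γ ^ s *
      fderiv ℝ r (traj f x₀ (pad a) s, pad a s)
        (fderiv ℝ (fun as => traj f x₀ (pad as) s) a e, pad e s) := by
  simp [(hasFDerivAt_Rtot hf hr a).fderiv, padCLM_apply]

end Trajectory

lemma fderiv_reward_add_value_apply {n m : ℕ} {r : (Fin n → ℝ) × (Fin m → ℝ) → ℝ}
    {f : (Fin n → ℝ) × (Fin m → ℝ) → Fin n → ℝ} {V : (Fin n → ℝ) → ℝ} {x : Fin n → ℝ}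
    {b : Fin m → ℝ} (hr : DifferentiableAt ℝ r (x, b)) (hf : DifferentiableAt ℝ f (x, b))
    (hV : DifferentiableAt ℝ V (f (x, b))) (γ : ℝ) (u : Fin m → ℝ) :
    fderiv ℝ (fun c => r (x, c) + γ * V (f (x, c))) b u =
      fderiv ℝ r (x, b) (0, u) + γ * (grad V (f (x, b)) ⬝ᵥ fderiv ℝ f (x, b) (0, u)) := by
  have hfx : HasFDerivAt (fun c => f (x, c)) _ b :=
    hf.hasFDerivAt.comp b (hasFDerivAt_prodMk_right x b)
  have hQ : HasFDerivAt (fun c => r (x, c) + γ * V (f (x, c))) _ b :=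
    (hr.hasFDerivAt.comp b (hasFDerivAt_prodMk_right x b)).add
      ((hV.hasFDerivAt.comp b hfx).const_mul γ)
  simp [hQ.fderiv, grad_dotProduct]

theorem fderiv_Rtot_apply_eq_sum_fderiv {n m F : ℕ} {f : (Fin n → ℝ) × (Fin m → ℝ) → Fin n → ℝ}
    {r : (Fin n → ℝ) × (Fin m → ℝ) → ℝ} {V : (Fin n → ℝ) → ℝ} {γ : ℝ} {x₀ : Fin n → ℝ}
    (hf : Differentiable ℝ f) (hr : Differentiable ℝ r) (hV : Differentiable ℝ V)
    (a : Fin F → Fin m → ℝ) (G : ℕ → Fin n → ℝ)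
    (hGV : ∀ s < F, G (s + 1) = grad V (traj f x₀ (pad a) (s + 1))) (hGF : G F = 0)
    (hGrec : ∀ s < F, G s = gradX r (traj f x₀ (pad a) s) (pad a s) +
      γ • (jacX f (traj f x₀ (pad a) s) (pad a s))ᵀ *ᵥ G (s + 1))
    (e : Fin F → Fin m → ℝ) :
    fderiv ℝ (Rtot F γ f r x₀) a e = ∑ s ∈ range F, γ ^ s *
      fderiv ℝ (fun b => r (traj f x₀ (pad a) s, b) + γ * V (f (traj f x₀ (pad a) s, b)))
        (pad a s) (pad e s) := by
  set x := traj f x₀ (pad a)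
  set δ := fun s => fderiv ℝ (fun as => traj f x₀ (pad as) s) a e
  set c := fun s => fderiv ℝ f (x s, pad a s) (0, pad e s)
  have hδ : ∀ s < F, δ (s + 1) = jacX f (x s) (pad a s) *ᵥ δ s + c s := by
    intro s _
    rw [jacX_mulVec (hf _), ← map_add, Prod.mk_add_mk, add_zero, zero_add]
    exact fderiv_traj_pad_succ_apply hf s a e
  have hδ0 : δ 0 = 0 := by simp [δ, traj]
  have hadjoint := sum_discounted_dotProduct_eq_of_costate γ F G
    (fun s => gradX r (x s) (pad a s)) δ c (fun s => jacX f (x s) (pad a s)) hGrec hGF hδ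
  rw [hδ0, dotProduct_zero, zero_add] at hadjoint
  calc fderiv ℝ (Rtot F γ f r x₀) a e
      = ∑ s ∈ range F, γ ^ s * (gradX r (x s) (pad a s) ⬝ᵥ δ s) +
          ∑ s ∈ range F, γ ^ s * fderiv ℝ r (x s, pad a s) (0, pad e s) := by
        rw [fderiv_Rtot_apply hf hr, ← sum_add_distrib]
        refine sum_congr rfl fun s _ => ?_
        rw [gradX_dotProduct (hr _), ← mul_add, ← map_add, Prod.mk_add_mk, add_zero, zero_add]
    _ = _ := by
        rw [hadjoint, ← sum_add_distrib]
        refine sum_congr rfl fun s hs => ?_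
        rw [fderiv_reward_add_value_apply (hr _) (hf _) (hV _), hGV s (mem_range.1 hs)]
        simp only [c, x, traj]
        ring

theorem stmt6_general {n m : ℕ} (F : ℕ) (γ : ℝ) (hγ : 0 < γ)
    (f : (Fin n → ℝ) × (Fin m → ℝ) → Fin n → ℝ)
    (r : (Fin n → ℝ) × (Fin m → ℝ) → ℝ)
    (hf : ContDiff ℝ 1 f) (hr : ContDiff ℝ 1 r)
    (V : (Fin n → ℝ) → ℝ) (hV : Differentiable ℝ V)
    (x₀ : Fin n → ℝ) (a : Fin F → Fin m → ℝ)
    (x : ℕ → Fin n → ℝ) (hxdef : x = traj f x₀ (pad a))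
    (Q : ℕ → (Fin m → ℝ) → ℝ)
    (hQdef : ∀ t, Q t = fun b => r (x t, b) + γ * V (f (x t, b)))
    (hbox : ∀ t : Fin F, ∀ i, a t i ∈ Set.Icc (-1 : ℝ) 1)
    (hgreedy : ∀ t : Fin F, ∀ b : Fin m → ℝ,
      (∀ i, b i ∈ Set.Icc (-1 : ℝ) 1) → Q t b ≤ Q t (a t))
    (G : ℕ → Fin n → ℝ) (hGdef : ∀ t, G t = grad V (x t))
    (hGF : G F = 0)
    (hGrec : ∀ t < F, G t =
      gradX r (x t) (pad a t) + γ • (jacX f (x t) (pad a t))ᵀ.mulVec (G (t + 1))) :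
    DifferentiableAt ℝ (Rtot F γ f r x₀) a ∧
    ∀ t : Fin F, ∀ i : Fin m,
      ((a t i ∈ Set.Ioo (-1 : ℝ) 1 ∧ fderiv ℝ (Q t) (a t) (Pi.single i 1) = 0) →
        fderiv ℝ (Rtot F γ f r x₀) a (Pi.single t (Pi.single i 1)) = 0) ∧
      (a t i = 1 →
        0 ≤ fderiv ℝ (Rtot F γ f r x₀) a (Pi.single t (Pi.single i 1)) ∧
        (fderiv ℝ (Q t) (a t) (Pi.single i 1) ≠ 0 →
          0 < fderiv ℝ (Rtot F γ f r x₀) a (Pi.single t (Pi.single i 1)))) ∧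
      (a t i = -1 →
        fderiv ℝ (Rtot F γ f r x₀) a (Pi.single t (Pi.single i 1)) ≤ 0 ∧
        (fderiv ℝ (Q t) (a t) (Pi.single i 1) ≠ 0 →
          fderiv ℝ (Rtot F γ f r x₀) a (Pi.single t (Pi.single i 1)) < 0)) := by
  have hfd : Differentiable ℝ f := hf.differentiable one_ne_zero
  have hrd : Differentiable ℝ r := hr.differentiable one_ne_zero
  subst hxdef
  refine ⟨(hasFDerivAt_Rtot hfd hrd a).differentiableAt, fun t i => ?_⟩
  have hR : fderiv ℝ (Rtot F γ f r x₀) a (Pi.single t (Pi.single i 1)) =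
      γ ^ (t : ℕ) * fderiv ℝ (Q t) (a t) (Pi.single i 1) := by
    rw [fderiv_Rtot_apply_eq_sum_fderiv hfd hrd hV a G (fun s _ => hGdef (s + 1)) hGF hGrec,
      sum_range_pad_single (fun s v => γ ^ s * fderiv ℝ _ (pad a s) v) (fun s => by simp),
      pad_coe, hQdef]
  have hQ : DifferentiableAt ℝ (Q t) (a t) := by
    rw [hQdef]
    fun_prop
  have hmem : a t ∈ Set.univ.pi fun _ => Set.Icc (-1 : ℝ) 1 := Set.mem_univ_pi.2 (hbox t)
  have hmax : IsMaxOn (Q t) (Set.univ.pi fun _ => Set.Icc (-1 : ℝ) 1) (a t) :=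
    isMaxOn_iff.2 fun b hb => hgreedy t b (Set.mem_univ_pi.1 hb)
  have hγt : 0 < γ ^ (t : ℕ) := pow_pos hγ _
  rw [hR]
  refine ⟨fun ⟨_, hzero⟩ => by rw [hzero, mul_zero], fun hi => ?_, fun hi => ?_⟩
  · have hQi := hmax.fderiv_apply_single_nonneg hQ hmem (by rw [hi]; norm_num)
    exact ⟨mul_nonneg hγt.le hQi, fun hne => mul_pos hγt (hQi.lt_of_ne' hne)⟩
  · have hQi := hmax.fderiv_apply_single_nonpos hQ hmem (by rw [hi]; norm_num)
    exact ⟨mul_nonpos_of_nonneg_of_nonpos hγt.le hQi,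
      fun hne => mul_neg_of_pos_of_neg hγt (hQi.lt_of_ne hne)⟩

/-- Theorem 1 of the paper: a greedy trajectory along which the
value-gradients satisfy the costate recursion is locally extremal. -/
theorem stmt6 {n m : ℕ} (F : ℕ) (hF : 1 ≤ F) (γ : ℝ) (hγ : 0 < γ)
    (f : (Fin n → ℝ) × (Fin m → ℝ) → Fin n → ℝ)
    (r : (Fin n → ℝ) × (Fin m → ℝ) → ℝ)
    (hf : ContDiff ℝ 1 f) (hr : ContDiff ℝ 1 r)
    (V : (Fin n → ℝ) → ℝ) (hV : Differentiable ℝ V)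
    (x₀ : Fin n → ℝ) (a : Fin F → Fin m → ℝ)
    (x : ℕ → Fin n → ℝ) (hxdef : x = traj f x₀ (pad a))
    (Q : ℕ → (Fin m → ℝ) → ℝ)
    (hQdef : ∀ t, Q t = fun b => r (x t, b) + γ * V (f (x t, b)))
    (hbox : ∀ t : Fin F, ∀ i, a t i ∈ Set.Icc (-1 : ℝ) 1)
    (hgreedy : ∀ t : Fin F, ∀ b : Fin m → ℝ,
      (∀ i, b i ∈ Set.Icc (-1 : ℝ) 1) → Q t b ≤ Q t (a t))
    (G : ℕ → Fin n → ℝ) (hGdef : ∀ t, G t = grad V (x t))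
    (hGF : G F = 0)
    (hGrec : ∀ t < F, G t =
      gradX r (x t) (pad a t) + γ • (jacX f (x t) (pad a t))ᵀ.mulVec (G (t + 1))) :
    DifferentiableAt ℝ (Rtot F γ f r x₀) a ∧
    ∀ t : Fin F, ∀ i : Fin m,
      ((a t i ∈ Set.Ioo (-1 : ℝ) 1 ∧ fderiv ℝ (Q t) (a t) (Pi.single i 1) = 0) →
        fderiv ℝ (Rtot F γ f r x₀) a (Pi.single t (Pi.single i 1)) = 0) ∧
      (a t i = 1 →
        0 ≤ fderiv ℝ (Rtot F γ f r x₀) a (Pi.single t (Pi.single i 1)) ∧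
        (fderiv ℝ (Q t) (a t) (Pi.single i 1) ≠ 0 →
          0 < fderiv ℝ (Rtot F γ f r x₀) a (Pi.single t (Pi.single i 1)))) ∧
      (a t i = -1 →
        fderiv ℝ (Rtot F γ f r x₀) a (Pi.single t (Pi.single i 1)) ≤ 0 ∧
        (fderiv ℝ (Q t) (a t) (Pi.single i 1) ≠ 0 →
          fderiv ℝ (Rtot F γ f r x₀) a (Pi.single t (Pi.single i 1)) < 0)) :=
  stmt6_general F γ hγ f r hf hr V hV x₀ a x hxdef Q hQdef hbox hgreedy G hGdef hGF hGrec
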